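/- Let M = (S, ρ) be a matroid scheme with no loops and let F = F(M) be its poset of flats, with rank function ρ restricted to F. Then the characteristic polynomial of F satisfies χ_F(t) = (−1)^{ρ(M)} · T_M(1 − t, 0), where T_M is the Tutte polynomial of M. -/

import Mathlib

/-- The set of minimal upper bounds of `x` and `y` (denoted `x ∨ y` in the paper). -/
def mub {S : Type*} [PartialOrder S] (x y : S) : Set S :=
  {u | x ≤ u ∧ y ≤ u ∧ ∀ v, x ≤ v → y ≤ v → v ≤ u → v = u}

/-- The set of maximal lower bounds of `x` and `y` (denoted `x ∧ y` in the paper). -/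
def mlb {S : Type*} [PartialOrder S] (x y : S) : Set S :=
  {l | l ≤ x ∧ l ≤ y ∧ ∀ m, m ≤ x → m ≤ y → l ≤ m → m = l}

/-- The set of minimal upper bounds of a subset `T`. -/
def mubSet {S : Type*} [PartialOrder S] (T : Set S) : Set S :=
  {u | (∀ t ∈ T, t ≤ u) ∧ ∀ v, (∀ t ∈ T, t ≤ v) → v ≤ u → v = u}

/-- The number of atoms below `x`, i.e. `|x|`, the rank of `x` in a simplicial poset. -/
noncomputable def natRank {S : Type*} [PartialOrder S] [OrderBot S] (x : S) : ℕ :=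
  Nat.card {a : S // IsAtom a ∧ a ≤ x}

/-- A finite bounded-below poset is simplicial if every lower interval is isomorphic to
the Boolean lattice of subsets of the set of atoms below. -/
def IsSimplicialPoset (S : Type*) [PartialOrder S] [OrderBot S] [Fintype S] : Prop :=
  ∀ x : S, Nonempty (Set.Iic x ≃o Set {a : S // IsAtom a ∧ a ≤ x})

/-- A matroid scheme: a rank function `ρ` on a finite simplicial poset `S`
satisfying (M1)–(M5). -/
structure IsMatroidScheme {S : Type*} [PartialOrder S] [OrderBot S] [Fintype S]
    (ρ : S → ℕ) : Prop where
  simplicial : IsSimplicialPoset S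
  M1 : ∀ x : S, ρ x ≤ natRank x
  M2 : ∀ ⦃x y : S⦄, x ≤ y → ρ x ≤ ρ y
  M3 : ∀ x y u l : S, u ∈ mub x y → l ∈ mlb x y → ρ u + ρ l ≤ ρ x + ρ y
  M4 : ∀ x y l : S, l ∈ mlb x y → ρ x = ρ l → (mub x y).Nonempty
  M5 : ∀ x y : S, ρ x < ρ y →
    ∃ a : S, IsAtom a ∧ a ≤ y ∧ ¬ a ≤ x ∧ (mub x a).Nonempty

/-- `cl` is the closure operator of a matroid scheme `(S, ρ)`:
`cl x` is the greatest element above `x` of the same rank. -/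
def IsClosureFun {S : Type*} [PartialOrder S] (ρ : S → ℕ) (cl : S → S) : Prop :=
  ∀ x : S, x ≤ cl x ∧ ρ (cl x) = ρ x ∧ ∀ y : S, x ≤ y → ρ y = ρ x → y ≤ cl x

/-- The bases of a matroid scheme: the maximal independent elements. -/
def Bases {S : Type*} [PartialOrder S] [OrderBot S] (ρ : S → ℕ) : Set S :=
  {x | ρ x = natRank x ∧ ∀ w, ρ w = natRank w → x ≤ w → w = x}

/-- The circuits of a matroid scheme: the minimal dependent elements. -/
def Circuits {S : Type*} [PartialOrder S] [OrderBot S] (ρ : S → ℕ) : Set S :=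
  {x | ρ x < natRank x ∧ ∀ y, ρ y < natRank y → y ≤ x → y = x}

/-- `c` is the complement `x ∖ a` of `a` in the Boolean lattice `S_{≤ x}`. -/
def IsComplementIn {S : Type*} [PartialOrder S] [OrderBot S] (c a x : S) : Prop :=
  c ≤ x ∧ a ≤ x ∧ (∀ l : S, l ≤ c → l ≤ a → l = ⊥) ∧
    (∀ u : S, u ≤ x → c ≤ u → a ≤ u → u = x)

/-- The rank of a matroid scheme: the common value of `ρ` on maximal elements
(equal to the maximum value of `ρ`). -/
noncomputable def schemeRank {S : Type*} [Fintype S] (ρ : S → ℕ) : ℕ :=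
  sSup (Set.range ρ)

/-- The Tutte polynomial of a matroid scheme, as a two-variable integer function. -/
noncomputable def tutte {S : Type*} [PartialOrder S] [OrderBot S] [Fintype S]
    (ρ : S → ℕ) (x y : ℤ) : ℤ :=
  ∑ w : S, (x - 1) ^ (schemeRank ρ - ρ w) * (y - 1) ^ (natRank w - ρ w)

/-- An element of a poset is an order-atom if it covers a global minimum. -/
def OrdAtom {P : Type*} [PartialOrder P] (a : P) : Prop :=
  ∃ b : P, (∀ z : P, b ≤ z) ∧ b ⋖ a

/-- A partial order is a geometric lattice: it is bounded below, every pair has a least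
upper bound and greatest lower bound, it is atomistic, and it is (upper) semimodular. -/
def IsGeomLatOrder (P : Type*) [PartialOrder P] : Prop :=
  (∃ b : P, ∀ x : P, b ≤ x) ∧
  (∀ x y : P, ∃ u : P, IsLUB {x, y} u) ∧
  (∀ x y : P, ∃ l : P, IsGLB {x, y} l) ∧
  (∀ x : P, IsLUB {a : P | OrdAtom a ∧ a ≤ x} x) ∧
  (∀ x y m j : P, IsGLB {x, y} m → IsLUB {x, y} j → m ⋖ x → y ⋖ j)

/-- A geometric poset: a finite bounded-below poset with rank function `rk`
satisfying (G1) and (G2). -/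
def IsGeometricPoset (P : Type*) [PartialOrder P] [OrderBot P] [Fintype P]
    (rk : P → ℕ) : Prop :=
  rk ⊥ = 0 ∧
  (∀ ⦃x y : P⦄, x ≤ y → rk x ≤ rk y) ∧
  (∀ x y : P, x ⋖ y → rk y = rk x + 1) ∧
  (∀ m : P, IsMax m → IsGeomLatOrder (Set.Iic m)) ∧
  (∀ (x : P) (A : Set P), (∀ a ∈ A, IsAtom a) →
    ∀ y ∈ mubSet A, rk x < rk y → rk y = Nat.card A →
      ∃ a ∈ A, ¬ a ≤ x ∧ ∃ w : P, x ≤ w ∧ a ≤ w)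

/-!
The Möbius function of the poset of flats is the alternating fibre sum of the closure,
`μ F = ∑_{cl w = F} (-1)^|w|`: both satisfy the defining recursion, because for a flat `F` the
elements `w` with `cl w ≤ F` are exactly those below `F`, and the alternating sum over the
Boolean interval `S_{≤ F}` vanishes unless `F = 0̂` (a flat, as `M` has no loops).
Summing over the fibres of the closure turns `χ_F(t)` into `∑_w (-1)^|w| t^(r - ρ w)`, which is
`(-1)^r T_M(1 - t, 0)` term by term.
-/

open Finset

section Mobius

variable {P : Type*} [PartialOrder P] [Fintype P] [DecidableLE P]

theorem eq_of_forall_sum_le_eq {M : Type*} [AddCancelCommMonoid M] {f g : P → M}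
    (h : ∀ x, ∑ u with u ≤ x, f u = ∑ u with u ≤ x, g u) : f = g := by
  classical
  funext x
  induction x using WellFoundedLT.induction with
  | _ x ih =>
    have sum_le_eq : ∀ φ : P → M, ∑ u with u ≤ x, φ u = φ x + ∑ u with u < x, φ u := fun φ => by
      rw [← add_sum_erase _ _ (by simp : x ∈ _)]
      congr 2
      ext u
      simp [lt_iff_le_and_ne, and_comm]
    have hx := h x
    rw [sum_le_eq, sum_le_eq, sum_congr rfl fun u hu => ih u (mem_filter.mp hu).2] at hx
    exact add_right_cancel hx

theorem sum_le_eq_ite_of_mobius [DecidableEq P] {R : Type*} [AddCommMonoid R] [One R]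
    {μ : P → R} {b : P} (hb : ∀ z, b ≤ z) (hμb : μ b = 1) (hμ : ∀ w, b < w → ∑ u with u ≤ w, μ u = 0) (w : P) :
    ∑ u with u ≤ w, μ u = if w = b then 1 else 0 := by
  rcases (hb w).eq_or_lt with rfl | hbw
  · rw [if_pos rfl, ← hμb]
    exact sum_eq_single_of_mem _ (by simp)
      fun u hu hne => (hne (le_antisymm (mem_filter.mp hu).2 (hb u))).elim
  · rw [if_neg hbw.ne', hμ w hbw]

end Mobius

section Simplicial

variable {S : Type*} [PartialOrder S] [OrderBot S]

theorem natRank_bot : natRank (⊥ : S) = 0 :=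
  Nat.card_eq_zero.mpr <| Or.inl ⟨fun a => a.2.1.ne_bot (le_bot_iff.mp a.2.2)⟩

theorem natRank_congr {T : Type*} [PartialOrder T] [OrderBot T] (e : S ≃o T) (x : S) :
    natRank (e x) = natRank x :=
  (Nat.card_congr <| e.toEquiv.subtypeEquiv fun a => by
    simp [e.isAtom_iff, e.le_iff_le]).symm

theorem natRank_Iic_coe {x : S} (w : Set.Iic x) : natRank (w : S) = natRank w :=
  Nat.card_congr
    { toFun := fun a => ⟨⟨a, a.2.2.trans w.2⟩, a.2.1.Iic _, a.2.2⟩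
      invFun := fun a => ⟨a.1, a.2.1.of_isAtom_coe_Iic, a.2.2⟩
      left_inv := fun _ => rfl
      right_inv := fun _ => rfl }

theorem natRank_set {α : Type*} (T : Set α) : natRank T = Nat.card T := by
  refine (Nat.card_congr (Equiv.ofBijective
    (fun a : T => (⟨{a.1}, Set.isAtom_singleton _, Set.singleton_subset_iff.2 a.2⟩ :
      {A : Set α // IsAtom A ∧ A ≤ T})) ⟨fun a b hab => ?_, fun A => ?_⟩)).symm
  · exact Subtype.ext (Set.singleton_eq_singleton_iff.mp (congrArg Subtype.val hab))
  · obtain ⟨a, ha⟩ := Set.isAtom_iff.mp A.2.1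
    exact ⟨⟨a, A.2.2 (ha ▸ rfl)⟩, Subtype.ext ha.symm⟩

theorem IsSimplicialPoset.sum_le_neg_one_pow_natRank [Fintype S] [DecidableLE S]
    [DecidableEq S] (hS : IsSimplicialPoset S) (x : S) :
    ∑ w with w ≤ x, (-1 : ℤ) ^ natRank w = if x = ⊥ then 1 else 0 := by
  classical
  obtain ⟨e⟩ := hS x
  set A := {a : S // IsAtom a ∧ a ≤ x}
  calc ∑ w with w ≤ x, (-1 : ℤ) ^ natRank w
      = ∑ w : Set.Iic x, (-1 : ℤ) ^ natRank (w : S) := sum_subtype _ (by simp) _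
    _ = ∑ T : Set A, (-1 : ℤ) ^ Nat.card T := by
        rw [← e.toEquiv.sum_comp]
        simp [natRank_Iic_coe, ← natRank_congr e, natRank_set]
    _ = ∑ s : Finset A, (-1 : ℤ) ^ #s := by
        rw [← Fintype.finsetEquivSet.sum_comp]
        simp
    _ = if x = ⊥ then 1 else 0 := by
        have hA : IsEmpty A ↔ x = ⊥ := by
          refine ⟨fun hA => ?_, fun hx => ⟨fun a => a.2.1.ne_bot (le_bot_iff.mp (hx ▸ a.2.2))⟩⟩
          exact (eq_bot_or_exists_atom_le x).resolve_right fun ⟨a, ha, hax⟩ =>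
            hA.false ⟨a, ha, hax⟩
        simp only [← powerset_univ, sum_powerset_neg_one_pow_card, univ_eq_empty_iff, hA]

end Simplicial

theorem IsClosureFun.closure_closure {S : Type*} [PartialOrder S] {ρ : S → ℕ} {cl : S → S}
    (hcl : IsClosureFun ρ cl) (x : S) : cl (cl x) = cl x :=
  le_antisymm
    ((hcl x).2.2 _ ((hcl x).1.trans (hcl (cl x)).1) (by rw [(hcl (cl x)).2.1, (hcl x).2.1]))
    (hcl (cl x)).1

def IsClosureFun.toFlat {S : Type*} [PartialOrder S] {ρ : S → ℕ} {cl : S → S}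
    (hcl : IsClosureFun ρ cl) (w : S) : {x : S // cl x = x} :=
  ⟨cl w, hcl.closure_closure w⟩

theorem le_schemeRank {S : Type*} [Fintype S] (ρ : S → ℕ) (x : S) : ρ x ≤ schemeRank ρ :=
  le_csSup (Set.finite_range ρ).bddAbove ⟨x, rfl⟩

namespace IsMatroidScheme

variable {S : Type*} [PartialOrder S] [OrderBot S] [Fintype S] {ρ : S → ℕ} {cl : S → S}

theorem rho_bot (h : IsMatroidScheme ρ) : ρ ⊥ = 0 :=
  Nat.le_zero.mp (natRank_bot (S := S) ▸ h.M1 ⊥)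

theorem closure_bot (h : IsMatroidScheme ρ) (hcl : IsClosureFun ρ cl)
    (hnoloop : ∀ a : S, IsAtom a → ρ a ≠ 0) : cl ⊥ = ⊥ := by
  refine (eq_bot_or_exists_atom_le (cl ⊥)).resolve_right fun ⟨a, ha, hacl⟩ => hnoloop a ha ?_
  have := h.M2 hacl
  rwa [(hcl ⊥).2.1, h.rho_bot, Nat.le_zero] at this

/-- A maximal common lower bound `l ≥ w` of `cl w` and `F` has the rank of `cl w`, so (M4)
gives a minimal upper bound `u`, and (M3) forces `ρ u = ρ F`, whence `u ≤ cl F = F`. -/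
theorem closure_le_of_le (h : IsMatroidScheme ρ) (hcl : IsClosureFun ρ cl) {w F : S}
    (hF : cl F = F) (hwF : w ≤ F) : cl w ≤ F := by
  obtain ⟨l, hwl, hl⟩ := Finite.exists_le_maximal
    (p := fun m => m ≤ cl w ∧ m ≤ F) (a := w) ⟨(hcl w).1, hwF⟩
  have hlm : l ∈ mlb (cl w) F :=
    ⟨hl.1.1, hl.1.2, fun m h1 h2 h3 => le_antisymm (hl.2 ⟨h1, h2⟩ h3) h3⟩
  have hρl : ρ (cl w) = ρ l :=
    le_antisymm ((hcl w).2.1 ▸ h.M2 hwl) (h.M2 hl.1.1)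
  obtain ⟨u, hu⟩ := h.M4 (cl w) F l hlm hρl
  have hρu : ρ u = ρ F := le_antisymm (by linarith [h.M3 (cl w) F u l hu hlm]) (h.M2 hu.2.1)
  exact hu.1.trans (hF ▸ (hcl F).2.2 u hu.2.1 hρu)

theorem sum_le_sum_fiber_toFlat {M : Type*} [AddCommMonoid M] [DecidableLE S]
    [Fintype {x : S // cl x = x}] [DecidableEq {x : S // cl x = x}]
    [DecidableLE {x : S // cl x = x}]
    (h : IsMatroidScheme ρ) (hcl : IsClosureFun ρ cl) (g : S → M) (F : {x : S // cl x = x}) :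
    ∑ u with u ≤ F, ∑ w with hcl.toFlat w = u, g w = ∑ w with w ≤ F.val, g w := by
  rw [sum_fiberwise_eq_sum_filter]
  congr 1
  ext w
  simpa [IsClosureFun.toFlat, ← Subtype.coe_le_coe] using
    ⟨(hcl w).1.trans, h.closure_le_of_le hcl F.2⟩

theorem mobius_eq_sum_fiber_toFlat [DecidableEq S] [DecidableLE S]
    [Fintype {x : S // cl x = x}] [DecidableLE {x : S // cl x = x}]
    (h : IsMatroidScheme ρ) (hcl : IsClosureFun ρ cl) (hnoloop : ∀ a : S, IsAtom a → ρ a ≠ 0)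
    {μ : {x : S // cl x = x} → ℤ} {b : {x : S // cl x = x}} (hb : ∀ z, b ≤ z) (hμb : μ b = 1)
    (hμ : ∀ w, b < w → ∑ u with u ≤ w, μ u = 0) (F : {x : S // cl x = x}) :
    μ F = ∑ w with hcl.toFlat w = F, (-1 : ℤ) ^ natRank w := by
  have hb_bot : b.val = ⊥ := le_bot_iff.mp (hb ⟨⊥, h.closure_bot hcl hnoloop⟩)
  refine congrFun (eq_of_forall_sum_le_eq (f := μ)
    (g := fun F => ∑ w with hcl.toFlat w = F, (-1 : ℤ) ^ natRank w) fun F => ?_) F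
  rw [sum_le_eq_ite_of_mobius hb hμb hμ, h.sum_le_sum_fiber_toFlat hcl,
    h.simplicial.sum_le_neg_one_pow_natRank]
  simp only [Subtype.ext_iff, hb_bot]

end IsMatroidScheme

theorem neg_one_pow_mul_pow_sub_eq {R : Type*} [CommRing R] (t : R) {a m n : ℕ} (han : a ≤ n)
    (ham : a ≤ m) : (-1) ^ m * t ^ (n - a) = (-1) ^ n * ((-t) ^ (n - a) * (-1) ^ (m - a)) := by
  obtain ⟨k, rfl⟩ := Nat.exists_eq_add_of_le han
  obtain ⟨j, rfl⟩ := Nat.exists_eq_add_of_le ham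
  have hk : ((-1 : R) ^ k) * (-1) ^ k = 1 := by rw [← mul_pow, neg_mul_neg, one_mul, one_pow]
  simp only [Nat.add_sub_cancel_left, neg_pow t, pow_add]
  linear_combination (-(-1) ^ a * (-1) ^ j * t ^ k) * hk

open Classical in
/-- Theorem 11.2: for a loopless matroid scheme, the characteristic polynomial of
the poset of flats satisfies `χ_F(t) = (−1)^{ρ(M)} T_M(1 − t, 0)`. -/
theorem statement19 {S : Type*} [PartialOrder S] [OrderBot S] [Fintype S]
    (ρ : S → ℕ) (h : IsMatroidScheme ρ) (cl : S → S) (hcl : IsClosureFun ρ cl)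
    (hnoloop : ∀ a : S, IsAtom a → ρ a ≠ 0)
    (μ : {x : S // cl x = x} → ℤ) (b : {x : S // cl x = x})
    (hb : ∀ z : {x : S // cl x = x}, b ≤ z)
    (hμb : μ b = 1)
    (hμ : ∀ w : {x : S // cl x = x}, b < w →
      ∑ u : {x : S // cl x = x}, (if u ≤ w then μ u else 0) = 0) :
    ∀ t : ℤ,
      ∑ w : {x : S // cl x = x}, μ w * t ^ (schemeRank ρ - ρ w.val) =
        (-1 : ℤ) ^ (schemeRank ρ) * tutte ρ (1 - t) 0 := by
  intro t
  simp_rw [← sum_filter] at hμ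
  calc ∑ F : {x : S // cl x = x}, μ F * t ^ (schemeRank ρ - ρ F.val)
      = ∑ F, ∑ w with hcl.toFlat w = F,
          (-1 : ℤ) ^ natRank w * t ^ (schemeRank ρ - ρ (hcl.toFlat w).val) := by
        refine sum_congr rfl fun F _ => ?_
        rw [h.mobius_eq_sum_fiber_toFlat hcl hnoloop hb hμb hμ, sum_mul]
        exact sum_congr rfl fun w hw => by rw [(mem_filter.mp hw).2]
    _ = ∑ w, (-1 : ℤ) ^ natRank w * t ^ (schemeRank ρ - ρ w) := by
        rw [sum_fiberwise]
        simp only [IsClosureFun.toFlat, (hcl _).2.1]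
    _ = (-1 : ℤ) ^ (schemeRank ρ) * tutte ρ (1 - t) 0 := by
        rw [tutte, mul_sum]
        simp only [sub_sub_cancel_left, zero_sub]
        exact sum_congr rfl fun w _ =>
          neg_one_pow_mul_pow_sub_eq t (le_schemeRank ρ w) (h.M1 w)
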